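/- The elliptic curve E_{p,r} : y^2 = x^3 + (p^2+4)W x^2 - 4(19p+41)(p^2+4)W^2 x - 4(p^2+4)^2(16p+199)W^3 over Q(p,r) has j-invariant equal to (p^2 + 228p + 496)^3 / (p - 11)^5. -/

import Mathlib

/-!
The curve is the quadratic twist by `W` of
`y² = x³ + (p²+4)x² - 4(19p+41)(p²+4)x - 4(p²+4)²(16p+199)`, so `c₄` and `Δ` pick up the
factors `W²` and `W⁶`, which cancel in `j = c₄³ / Δ`. Over any commutative ring one has
`c₄ = 16 (p²+4)W² (p²+228p+496)` and `Δ = 4096 ((p²+4)W²)³ (p-11)⁵`; the curve being elliptic,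
`Δ ≠ 0`, which also rules out `p = 11`.
-/

/-- The field `ℚ(p, r)` realized as `RatFunc (RatFunc ℚ)`,
with `p` the inner variable and `r` the outer variable. -/
noncomputable abbrev Kpr : Type := RatFunc (RatFunc ℚ)

noncomputable def pv : Kpr := RatFunc.C RatFunc.X

noncomputable def rv : Kpr := RatFunc.X

/-- `W = W_{p,r} = 16(p²+4)r³ + 4(p²+4)r² - 4(19p+41)r - 16p - 199`. -/
noncomputable def Wv : Kpr :=
  16 * (pv ^ 2 + 4) * rv ^ 3 + 4 * (pv ^ 2 + 4) * rv ^ 2 - 4 * (19 * pv + 41) * rv -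
    16 * pv - 199

/-- The curve `E_{p,r} : y² = x³ + (p²+4)Wx² - 4(19p+41)(p²+4)W²x - 4(p²+4)²(16p+199)W³`. -/
noncomputable def Epr : WeierstrassCurve Kpr :=
  { a₁ := 0, a₂ := (pv ^ 2 + 4) * Wv, a₃ := 0,
    a₄ := -4 * (19 * pv + 41) * (pv ^ 2 + 4) * Wv ^ 2,
    a₆ := -4 * (pv ^ 2 + 4) ^ 2 * (16 * pv + 199) * Wv ^ 3 }

namespace WeierstrassCurve

variable {R : Type*} [CommRing R] {F : Type*} [Field F]

def twistFamily (p W : R) : WeierstrassCurve R :=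
  { a₁ := 0, a₂ := (p ^ 2 + 4) * W, a₃ := 0,
    a₄ := -4 * (19 * p + 41) * (p ^ 2 + 4) * W ^ 2,
    a₆ := -4 * (p ^ 2 + 4) ^ 2 * (16 * p + 199) * W ^ 3 }

lemma c₄_twistFamily (p W : R) :
    (twistFamily p W).c₄ = 16 * ((p ^ 2 + 4) * W ^ 2) * (p ^ 2 + 228 * p + 496) := by
  simp only [twistFamily, c₄, b₂, b₄]
  ring

lemma Δ_twistFamily (p W : R) :
    (twistFamily p W).Δ = 4096 * ((p ^ 2 + 4) * W ^ 2) ^ 3 * (p - 11) ^ 5 := by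
  simp only [twistFamily, Δ, b₂, b₄, b₆, b₈]
  ring

lemma j_eq_c₄_pow_three_div_Δ (E : WeierstrassCurve F) [E.IsElliptic] :
    E.j = E.c₄ ^ 3 / E.Δ := by
  rw [j, Units.val_inv_eq_inv_val, coe_Δ', inv_mul_eq_div]

theorem j_twistFamily (p W : F) [(twistFamily p W).IsElliptic] :
    (twistFamily p W).j = (p ^ 2 + 228 * p + 496) ^ 3 / (p - 11) ^ 5 := by
  have hΔ := (twistFamily p W).isUnit_Δ.ne_zero
  rw [Δ_twistFamily] at hΔ
  rw [j_eq_c₄_pow_three_div_Δ, c₄_twistFamily, Δ_twistFamily,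
    div_eq_div_iff hΔ (right_ne_zero_of_mul hΔ)]
  ring

end WeierstrassCurve

theorem j_invariant_Epr [Epr.IsElliptic] :
    Epr.j = (pv ^ 2 + 228 * pv + 496) ^ 3 / (pv - 11) ^ 5 :=
  @WeierstrassCurve.j_twistFamily _ _ pv Wv ‹_›
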